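/- For the stationary hard-wall reflected processes \widehat{l} and \widehat{r} (forward and backward), at every site n ∈ ℤ the sign of \widehat{l}_{n-1} + 2h_n + \widehat{r}_{n+1} equals the Fisher configuration s^{(F)}_n built from the Γ-extrema of S: it is +1 when n lies strictly inside a Γ-ascending stretch of height strictly greater than Γ, −1 when n lies strictly inside a Γ-descending stretch of height strictly greater than Γ, and 0 otherwise (between adjacent Γ-extrema of the same type, or on stretches of height exactly Γ). -/

import Mathlib

noncomputable def hatb (Γ x : ℝ) : ℝ := max (-Γ) (min Γ x)

/-- `u` is a `Γ`-maximum of `S` over `ℤ`: there are `s ≤ u ≤ t` with `S`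
maximal at `u` on `[s,t]`, `S_s ≤ S_u − Γ` and `S_t ≤ S_u − Γ`. -/
def IsGammaMax (S : ℤ → ℝ) (Γ : ℝ) (u : ℤ) : Prop :=
  ∃ s t : ℤ, s ≤ u ∧ u ≤ t ∧ (∀ i : ℤ, s ≤ i → i ≤ t → S i ≤ S u) ∧
    S s ≤ S u - Γ ∧ S t ≤ S u - Γ

/-- `u` is a `Γ`-minimum of `S` over `ℤ`. -/
def IsGammaMin (S : ℤ → ℝ) (Γ : ℝ) (u : ℤ) : Prop :=
  IsGammaMax (fun n => -S n) Γ u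

/-- `n` lies strictly inside a `Γ`-ascending stretch of height strictly
greater than `Γ`: there are a `Γ`-minimum `u` (last of its block) and a
`Γ`-maximum `v` (first of the next block, i.e. with no `Γ`-extrema strictly in
between) with `u < n ≤ v` and `S_v − S_u > Γ`. -/
def FisherPlus (S : ℤ → ℝ) (Γ : ℝ) (n : ℤ) : Prop :=
  ∃ u v : ℤ, IsGammaMin S Γ u ∧ IsGammaMax S Γ v ∧ u < n ∧ n ≤ v ∧ Γ < S v - S u ∧
    ∀ w : ℤ, u < w → w < v → ¬ IsGammaMin S Γ w ∧ ¬ IsGammaMax S Γ w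

/-- `n` lies strictly inside a `Γ`-descending stretch of height strictly greater than `Γ`. -/
def FisherMinus (S : ℤ → ℝ) (Γ : ℝ) (n : ℤ) : Prop :=
  FisherPlus (fun m => -S m) Γ n

open Classical in
/-- The Fisher domain-wall configuration `s^{(F)} ∈ {-1, 0, +1}^ℤ`. -/
noncomputable def fisherConfig (S : ℤ → ℝ) (Γ : ℝ) (n : ℤ) : ℝ :=
  if FisherPlus S Γ n then 1 else if FisherMinus S Γ n then -1 else 0

/-
Both reflected chains forget their past at a `Γ`-extremum: the forward chain is `-Γ` at every
`Γ`-minimum, and the backward chain, read just after `v`, is `-Γ` (resp. `Γ`) when `v` is a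
`Γ`-maximum (resp. minimum). Away from these resets the chains are controlled by the comparison
bounds
  `min (L a + 2 (S j - S a)) (Γ - 2 (M - S j)) ≤ L j ≤ max (L a + 2 (S j - S a)) (-Γ + 2 (S j - m))`
for bounds `m ≤ S ≤ M` on `[a, j]`, and their mirror images for the backward chain, which is a
forward chain for the time-reversed walk `k ↦ -S (-1 - k)`. Around a site `n` lying between
consecutive `Γ`-extrema `u < n ≤ v` these bounds pin down `L (n-1) + 2 h n + R (n+1)`: it vanishes
when `u` and `v` have the same type, and when `u` is a minimum and `v` a maximum it is squeezed
between `2 (S v - S u - Γ) ≥ 0` and a minimum of that quantity with strictly positive terms.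
Descending stretches follow by `S ↦ -S`.
-/

theorem hatb_le {Γ : ℝ} (hΓ : 0 ≤ Γ) (x : ℝ) : hatb Γ x ≤ Γ :=
  max_le (by linarith) (min_le_left _ _)

theorem neg_le_hatb (Γ x : ℝ) : -Γ ≤ hatb Γ x := le_max_left _ _

theorem min_le_hatb (Γ x : ℝ) : min Γ x ≤ hatb Γ x := le_max_right _ _

theorem hatb_neg {Γ : ℝ} (hΓ : 0 ≤ Γ) (x : ℝ) : hatb Γ (-x) = -hatb Γ x := by
  simp only [hatb, max_def, min_def]
  split_ifs <;> linarith

def IsForwardChain (Γ : ℝ) (S L : ℤ → ℝ) : Prop :=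
  ∀ k, L k = hatb Γ (L (k - 1) + 2 * (S k - S (k - 1)))

def IsBackwardChain (Γ : ℝ) (S R : ℤ → ℝ) : Prop :=
  ∀ k, R k = hatb Γ (R (k + 1) + 2 * (S k - S (k - 1)))

namespace IsForwardChain

variable {Γ : ℝ} {S L : ℤ → ℝ}

theorem le (hΓ : 0 ≤ Γ) (hL : IsForwardChain Γ S L) (k : ℤ) : L k ≤ Γ :=
  (hL k).trans_le (hatb_le hΓ _)

theorem neg (hΓ : 0 ≤ Γ) (hL : IsForwardChain Γ S L) : IsForwardChain Γ (-S) (-L) := fun k => by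
  simp only [Pi.neg_apply]
  rw [hL k, ← hatb_neg hΓ]
  ring_nf

theorem min_le (hL : IsForwardChain Γ S L) {a j : ℤ} (haj : a ≤ j) {M : ℝ}
    (hM : ∀ i, a ≤ i → i ≤ j → S i ≤ M) :
    min (L a + 2 * (S j - S a)) (Γ - 2 * (M - S j)) ≤ L j := by
  induction j, haj using Int.leInduction with
  | base => exact min_le_of_left_le (by simp)
  | succ j haj ih =>
    have hj := hM (j + 1) (by omega) le_rfl
    have ih := ih fun i h1 h2 => hM i h1 (by omega)
    rw [hL (j + 1), add_sub_cancel_right]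
    refine le_trans (le_min (min_le_of_right_le (by linarith)) ?_) (min_le_hatb _ _)
    rcases min_le_iff.1 ih with h | h
    · exact min_le_of_left_le (by linarith)
    · exact min_le_of_right_le (by linarith)

theorem le_max (hΓ : 0 ≤ Γ) (hL : IsForwardChain Γ S L) {a j : ℤ} (haj : a ≤ j) {m : ℝ}
    (hm : ∀ i, a ≤ i → i ≤ j → m ≤ S i) :
    L j ≤ max (L a + 2 * (S j - S a)) (-Γ + 2 * (S j - m)) := by
  have h := (hL.neg hΓ).min_le haj (M := -m) fun i h1 h2 => by
    simpa using hm i h1 h2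
  simp only [Pi.neg_apply] at h
  rcases min_le_iff.1 h with h | h
  · exact le_max_of_le_left (by linarith)
  · exact le_max_of_le_right (by linarith)

end IsForwardChain

namespace IsBackwardChain

variable {Γ : ℝ} {S R : ℤ → ℝ}

theorem neg (hΓ : 0 ≤ Γ) (hR : IsBackwardChain Γ S R) : IsBackwardChain Γ (-S) (-R) := fun k => by
  simp only [Pi.neg_apply]
  rw [hR k, ← hatb_neg hΓ]
  ring_nf

theorem reverse (hR : IsBackwardChain Γ S R) :
    IsForwardChain Γ (fun k => -S (-1 - k)) (fun k => R (-k)) := fun k => by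
  show R (-k) = hatb Γ (R (-(k - 1)) + 2 * (-S (-1 - k) - -S (-1 - (k - 1))))
  rw [hR (-k), show -k + 1 = -(k - 1) by ring, show -k - 1 = -1 - k by ring,
    show -1 - (k - 1) = -k by ring]
  ring_nf

theorem le (hΓ : 0 ≤ Γ) (hR : IsBackwardChain Γ S R) (k : ℤ) : R k ≤ Γ :=
  (hR k).trans_le (hatb_le hΓ _)

theorem min_le (hR : IsBackwardChain Γ S R) {c d : ℤ} (hcd : c ≤ d) {m : ℝ}
    (hm : ∀ i, c ≤ i → i ≤ d → m ≤ S i) :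
    min (R (d + 1) + 2 * (S d - S c)) (Γ - 2 * (S c - m)) ≤ R (c + 1) := by
  have h := hR.reverse.min_le (a := -1 - d) (j := -1 - c) (by omega) (M := -m) fun i h1 h2 => by
    have := hm (-1 - i) (by omega) (by omega)
    linarith
  simp only [sub_sub_cancel, neg_sub, sub_neg_eq_add] at h
  convert h using 3 <;> ring

theorem le_max (hΓ : 0 ≤ Γ) (hR : IsBackwardChain Γ S R) {c d : ℤ} (hcd : c ≤ d) {M : ℝ}
    (hM : ∀ i, c ≤ i → i ≤ d → S i ≤ M) :
    R (c + 1) ≤ max (R (d + 1) + 2 * (S d - S c)) (-Γ + 2 * (M - S c)) := by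
  have h := (hR.neg hΓ).min_le hcd (m := -M) fun i h1 h2 => by
    simpa using hM i h1 h2
  simp only [Pi.neg_apply] at h
  rcases min_le_iff.1 h with h | h
  · exact le_max_of_le_left (by linarith)
  · exact le_max_of_le_right (by linarith)

end IsBackwardChain

def IsGammaExtremum (S : ℤ → ℝ) (Γ : ℝ) (u : ℤ) : Prop :=
  IsGammaMin S Γ u ∨ IsGammaMax S Γ u

section Extrema

variable {S : ℤ → ℝ} {Γ : ℝ} {u v : ℤ}

theorem isGammaMin_iff : IsGammaMin S Γ u ↔ ∃ s t : ℤ, s ≤ u ∧ u ≤ t ∧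
    (∀ i, s ≤ i → i ≤ t → S u ≤ S i) ∧ S u + Γ ≤ S s ∧ S u + Γ ≤ S t := by
  constructor <;> rintro ⟨s, t, hsu, hut, hmin, hs, ht⟩ <;>
    exact ⟨s, t, hsu, hut, fun i h1 h2 => by linarith [hmin i h1 h2], by linarith, by linarith⟩

theorem isGammaMax_neg : IsGammaMax (-S) Γ u ↔ IsGammaMin S Γ u := Iff.rfl

theorem isGammaMin_neg : IsGammaMin (-S) Γ u ↔ IsGammaMax S Γ u := by
  simp only [IsGammaMin, Pi.neg_apply, neg_neg]

theorem isGammaExtremum_neg : IsGammaExtremum (-S) Γ u ↔ IsGammaExtremum S Γ u := by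
  rw [IsGammaExtremum, IsGammaExtremum, isGammaMin_neg, isGammaMax_neg, or_comm]

theorem IsGammaMin.not_isGammaMax (hΓ : 0 < Γ) (hu : IsGammaMin S Γ u) : ¬ IsGammaMax S Γ u := by
  obtain ⟨s, t, hsu, hut, hmin, hs, ht⟩ := isGammaMin_iff.1 hu
  rintro ⟨s', t', hsu', hut', hmax, hs', ht'⟩
  rcases le_total s s' with h | h
  · linarith [hmin s' h (by omega)]
  · linarith [hmax s h (by omega)]

theorem exists_min_Icc (S : ℤ → ℝ) {a b : ℤ} (hab : a ≤ b) :
    ∃ y, a ≤ y ∧ y ≤ b ∧ ∀ i, a ≤ i → i ≤ b → S y ≤ S i := by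
  obtain ⟨y, hy, hmin⟩ := (Finset.Icc a b).exists_min_image S (Finset.nonempty_Icc.2 hab)
  rw [Finset.mem_Icc] at hy
  exact ⟨y, hy.1, hy.2, fun i h1 h2 => hmin i (Finset.mem_Icc.2 ⟨h1, h2⟩)⟩

theorem exists_max_Icc (S : ℤ → ℝ) {a b : ℤ} (hab : a ≤ b) :
    ∃ x, a ≤ x ∧ x ≤ b ∧ ∀ i, a ≤ i → i ≤ b → S i ≤ S x := by
  simpa using exists_min_Icc (-S) hab

theorem exists_isGammaMin_mem_Ioo (hΓ : 0 < Γ) {a b c : ℤ} (hac : a ≤ c) (hcb : c ≤ b)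
    (ha : S c + Γ ≤ S a) (hb : S c + Γ ≤ S b) : ∃ y, a < y ∧ y < b ∧ IsGammaMin S Γ y := by
  obtain ⟨y, hay, hyb, hmin⟩ := exists_min_Icc S (hac.trans hcb)
  have hyc := hmin c hac hcb
  refine ⟨y, lt_of_le_of_ne hay ?_, lt_of_le_of_ne hyb ?_,
    isGammaMin_iff.2 ⟨a, b, hay, hyb, hmin, by linarith, by linarith⟩⟩ <;>
  · rintro rfl
    linarith

theorem exists_isGammaMax_mem_Ioo (hΓ : 0 < Γ) {a b c : ℤ} (hac : a ≤ c) (hcb : c ≤ b)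
    (ha : S a + Γ ≤ S c) (hb : S b + Γ ≤ S c) : ∃ y, a < y ∧ y < b ∧ IsGammaMax S Γ y := by
  simpa only [isGammaMin_neg] using
    exists_isGammaMin_mem_Ioo (S := -S) hΓ hac hcb
      (by simp only [Pi.neg_apply]; linarith) (by simp only [Pi.neg_apply]; linarith)

theorem IsGammaMin.add_le_of_adjacent (hΓ : 0 < Γ) (hu : IsGammaMin S Γ u)
    (hv : IsGammaMax S Γ v) (huv : u < v) (hadj : ∀ w, u < w → w < v → ¬ IsGammaMax S Γ w) :
    S u + Γ ≤ S v := by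
  obtain ⟨s, t, hsu, hut, hmin, hs, ht⟩ := isGammaMin_iff.1 hu
  obtain ⟨s', t', hsv, hvt, hmax, hs', ht'⟩ := hv
  by_contra! hlt
  have ht_out : ¬ (s' ≤ t ∧ t ≤ t') := fun ⟨h1, h2⟩ => by linarith [hmax t h1 h2]
  have hs_out : ¬ (s ≤ s' ∧ s' ≤ t) := fun ⟨h1, h2⟩ => by linarith [hmin s' h1 h2]
  rcases lt_or_ge t s' with hts | hst
  · obtain ⟨y, huy, hys, hy⟩ :=
      exists_isGammaMax_mem_Ioo hΓ hut hts.le (by linarith) (by linarith)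
    exact hadj y huy (by omega) hy
  · linarith [hmin t' (by omega) (by omega)]

theorem IsGammaMin.lt_of_adjacent (hΓ : 0 < Γ) (hu : IsGammaMin S Γ u) (hgap : S u + Γ ≤ S v)
    (hadj : ∀ w, u < w → w < v → ¬ IsGammaMin S Γ w) {i : ℤ} (hui : u < i) (hiv : i ≤ v) :
    S u < S i := by
  obtain ⟨s, t, hsu, hut, hmin, hs, ht⟩ := isGammaMin_iff.1 hu
  by_contra! hle
  rcases le_or_gt i t with hit | hti
  · have heq : S i = S u := le_antisymm hle (hmin i (by omega) hit)
    refine hadj i hui (lt_of_le_of_ne hiv ?_) (isGammaMin_iff.2 ⟨s, t, by omega, hit,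
      fun k h1 h2 => heq.trans_le (hmin k h1 h2), by linarith, by linarith⟩)
    rintro rfl
    linarith
  · obtain ⟨y, hty, hyv, hy⟩ :=
      exists_isGammaMin_mem_Ioo hΓ hti.le hiv (by linarith) (by linarith)
    exact hadj y (by omega) hyv hy

theorem IsGammaMax.lt_of_adjacent (hΓ : 0 < Γ) (hv : IsGammaMax S Γ v) (hgap : S u + Γ ≤ S v)
    (hadj : ∀ w, u < w → w < v → ¬ IsGammaMax S Γ w) {i : ℤ} (hui : u ≤ i) (hiv : i < v) :
    S i < S v := by
  obtain ⟨s, t, hsv, hvt, hmax, hs, ht⟩ := hv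
  by_contra! hle
  rcases le_or_gt s i with hsi | his
  · have heq : S i = S v := le_antisymm (hmax i hsi (by omega)) hle
    refine hadj i (lt_of_le_of_ne hui ?_) hiv ⟨s, t, hsi, by omega,
      fun k h1 h2 => (hmax k h1 h2).trans_eq heq.symm, by linarith, by linarith⟩
    rintro rfl
    linarith
  · obtain ⟨y, huy, hys, hy⟩ :=
      exists_isGammaMax_mem_Ioo hΓ hui his.le (by linarith) (by linarith)
    exact hadj y huy (by omega) hy

theorem sub_lt_of_adjacent (hΓ : 0 < Γ) (hmax : ∀ i, u ≤ i → i ≤ v → S i ≤ S v)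
    (hadj : ∀ w, u < w → w < v → ¬ IsGammaMin S Γ w) {i j : ℤ} (hui : u ≤ i) (hij : i ≤ j)
    (hjv : j ≤ v) : S i - S j < Γ := by
  by_contra! h
  obtain ⟨y, hiy, hyv, hy⟩ := exists_isGammaMin_mem_Ioo hΓ hij hjv (by linarith)
    (by linarith [hmax i hui (by omega)])
  exact hadj y (by omega) hyv hy

theorem IsGammaMin.eq_of_adjacent (hΓ : 0 < Γ) (hu : IsGammaMin S Γ u) (hv : IsGammaMin S Γ v)
    (huv : u < v) (hadj : ∀ w, u < w → w < v → ¬ IsGammaMax S Γ w) : S u = S v := by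
  obtain ⟨s, t, hsu, hut, hmin, hs, ht⟩ := isGammaMin_iff.1 hu
  obtain ⟨s', t', hsv, hvt, hmin', hs', ht'⟩ := isGammaMin_iff.1 hv
  rcases lt_trichotomy (S u) (S v) with h | h | h
  · have hus : u ≤ s' := by
      by_contra!
      linarith [hmin' u this.le (by omega)]
    obtain ⟨y, huy, hyv, hy⟩ := exists_isGammaMax_mem_Ioo hΓ hus hsv (by linarith) (by linarith)
    exact (hadj y huy hyv hy).elim
  · exact h
  · have htv : t ≤ v := by
      by_contra!
      linarith [hmin v (by omega) this.le]
    obtain ⟨y, huy, hyv, hy⟩ := exists_isGammaMax_mem_Ioo hΓ hut htv (by linarith) (by linarith)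
    exact (hadj y huy hyv hy).elim

theorem IsGammaMin.le_of_adjacent (hΓ : 0 < Γ) (hu : IsGammaMin S Γ u) (hv : IsGammaMin S Γ v)
    (heq : S u = S v) (hadj : ∀ w, u < w → w < v → ¬ IsGammaMin S Γ w) {i : ℤ} (hui : u ≤ i)
    (hiv : i ≤ v) : S u ≤ S i := by
  obtain ⟨s, t, hsu, hut, hmin, hs, ht⟩ := isGammaMin_iff.1 hu
  obtain ⟨s', t', hsv, hvt, hmin', hs', ht'⟩ := isGammaMin_iff.1 hv
  by_contra! h
  have hti : t < i := by
    by_contra!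
    linarith [hmin i (by omega) this]
  have his : i < s' := by
    by_contra!
    linarith [hmin' i this (by omega)]
  obtain ⟨y, hty, hys, hy⟩ := exists_isGammaMin_mem_Ioo hΓ hti.le his.le (by linarith) (by linarith)
  exact hadj y (by omega) (by omega) hy

theorem lt_add_of_adjacent (hΓ : 0 < Γ) (heq : S u = S v)
    (hadj : ∀ w, u < w → w < v → ¬ IsGammaMax S Γ w) {i : ℤ} (hui : u ≤ i) (hiv : i ≤ v) :
    S i < S u + Γ := by
  by_contra! h
  obtain ⟨y, huy, hyv, hy⟩ := exists_isGammaMax_mem_Ioo hΓ hui hiv (by linarith) (by linarith)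
  exact hadj y huy hyv hy

end Extrema

section Resets

variable {Γ : ℝ} {S L R : ℤ → ℝ} {u v : ℤ}

theorem IsForwardChain.eq_neg_of_isGammaMin (hΓ : 0 ≤ Γ)
    (hL : IsForwardChain Γ S L) (hu : IsGammaMin S Γ u) : L u = -Γ := by
  obtain ⟨s, t, hsu, hut, hmin, hs, -⟩ := isGammaMin_iff.1 hu
  have h := hL.le_max hΓ hsu (m := S u) fun i h1 h2 => hmin i h1 (by omega)
  refine le_antisymm ?_ ((neg_le_hatb _ _).trans_eq (hL u).symm)
  rcases le_max_iff.1 h with h | h <;> linarith [hL.le hΓ s]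

theorem IsBackwardChain.eq_neg_of_isGammaMax (hΓ : 0 ≤ Γ)
    (hR : IsBackwardChain Γ S R) (hv : IsGammaMax S Γ v) : R (v + 1) = -Γ := by
  obtain ⟨s, t, hsv, hvt, hmax, -, ht⟩ := hv
  have h := hR.le_max hΓ hvt (M := S v) fun i h1 h2 => hmax i (by omega) h2
  refine le_antisymm ?_ ((neg_le_hatb _ _).trans_eq (hR (v + 1)).symm)
  rcases le_max_iff.1 h with h | h <;> linarith [hR.le hΓ (t + 1)]

theorem IsBackwardChain.eq_of_isGammaMin (hΓ : 0 ≤ Γ)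
    (hR : IsBackwardChain Γ S R) (hv : IsGammaMin S Γ v) : R (v + 1) = Γ := by
  simpa using (hR.neg hΓ).eq_neg_of_isGammaMax hΓ (isGammaMax_neg.2 hv)

end Resets

def chainSum (S L R : ℤ → ℝ) (n : ℤ) : ℝ :=
  L (n - 1) + 2 * (S n - S (n - 1)) + R (n + 1)

section ChainSum

variable {Γ : ℝ} {S L R : ℤ → ℝ} {u v n : ℤ}

theorem chainSum_neg : chainSum (-S) (-L) (-R) n = -chainSum S L R n := by
  simp only [chainSum, Pi.neg_apply]
  ring

theorem sign_chainSum_of_ascending (hΓ : 0 < Γ) (hL : IsForwardChain Γ S L)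
    (hR : IsBackwardChain Γ S R) (hu : IsGammaMin S Γ u) (hv : IsGammaMax S Γ v)
    (hun : u < n) (hnv : n ≤ v) (hadj : ∀ w, u < w → w < v → ¬ IsGammaExtremum S Γ w) :
    Real.sign (chainSum S L R n) = if Γ < S v - S u then 1 else 0 := by
  have hno_min w h1 h2 : ¬ IsGammaMin S Γ w := fun h => hadj w h1 h2 (Or.inl h)
  have hno_max w h1 h2 : ¬ IsGammaMax S Γ w := fun h => hadj w h1 h2 (Or.inr h)
  have hgap := hu.add_le_of_adjacent hΓ hv (by omega) hno_max
  have hmin : ∀ {i}, u < i → i ≤ v → S u < S i := hu.lt_of_adjacent hΓ hgap hno_min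
  have hmax : ∀ {i}, u ≤ i → i < v → S i < S v := hv.lt_of_adjacent hΓ hgap hno_max
  have hmin' i (h1 : u ≤ i) (h2 : i ≤ v) : S u ≤ S i := by
    rcases h1.lt_or_eq with h1 | rfl
    exacts [(hmin h1 h2).le, le_rfl]
  have hmax' i (h1 : u ≤ i) (h2 : i ≤ v) : S i ≤ S v := by
    rcases h2.lt_or_eq with h2 | rfl
    exacts [(hmax h1 h2).le, le_rfl]
  obtain ⟨x, hux, hxn, hx⟩ := exists_max_Icc S (show u ≤ n - 1 by omega)
  obtain ⟨z, hnz, hzv, hz⟩ := exists_min_Icc S hnv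
  have hz_pos := hmin (show u < z by omega) hzv
  have hx_pos := hmax hux (show x < v by omega)
  have hdrop := sub_lt_of_adjacent hΓ hmax' hno_min hux (show x ≤ z by omega) hzv
  have hL_ge := hL.min_le (show u ≤ n - 1 by omega) hx
  have hL_le := hL.le_max hΓ.le (show u ≤ n - 1 by omega) (m := S u) fun i h1 h2 =>
    hmin' i h1 (by omega)
  have hR_ge := hR.min_le hnv hz
  have hR_le := hR.le_max hΓ.le hnv (M := S v) fun i h1 h2 => hmax' i (by omega) h2
  rw [hL.eq_neg_of_isGammaMin hΓ.le hu] at hL_ge hL_le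
  rw [hR.eq_neg_of_isGammaMax hΓ.le hv] at hR_ge hR_le
  rw [max_self] at hL_le hR_le
  unfold chainSum
  -- The pairwise sums of the two lower bounds are `2 (S v - S u - Γ)`, `2 (S z - S u)`,
  -- `2 (S v - S x)` and `2 (Γ - (S x - S z))`; only the first can vanish.
  split_ifs with hlt
  · apply Real.sign_of_pos
    rcases min_le_iff.1 hL_ge with h1 | h1 <;> rcases min_le_iff.1 hR_ge with h2 | h2 <;> linarith
  · rw [Real.sign_eq_zero_iff]
    refine le_antisymm (by linarith) ?_
    rcases min_le_iff.1 hL_ge with h1 | h1 <;> rcases min_le_iff.1 hR_ge with h2 | h2 <;> linarith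

theorem chainSum_eq_zero_of_isGammaMin (hΓ : 0 < Γ) (hL : IsForwardChain Γ S L)
    (hR : IsBackwardChain Γ S R) (hu : IsGammaMin S Γ u) (hv : IsGammaMin S Γ v)
    (hun : u < n) (hnv : n ≤ v) (hadj : ∀ w, u < w → w < v → ¬ IsGammaExtremum S Γ w) :
    chainSum S L R n = 0 := by
  have hno_min w h1 h2 : ¬ IsGammaMin S Γ w := fun h => hadj w h1 h2 (Or.inl h)
  have hno_max w h1 h2 : ¬ IsGammaMax S Γ w := fun h => hadj w h1 h2 (Or.inr h)
  have heq := hu.eq_of_adjacent hΓ hv (by omega) hno_max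
  have hlo i (h1 : u ≤ i) (h2 : i ≤ v) := hu.le_of_adjacent hΓ hv heq hno_min h1 h2
  have hhi i (h1 : u ≤ i) (h2 : i ≤ v) := (lt_add_of_adjacent hΓ heq hno_max h1 h2).le
  have hL_ge := hL.min_le (show u ≤ n - 1 by omega) (M := S u + Γ) fun i h1 h2 =>
    hhi i h1 (by omega)
  have hL_le := hL.le_max hΓ.le (show u ≤ n - 1 by omega) (m := S u) fun i h1 h2 =>
    hlo i h1 (by omega)
  have hR_ge := hR.min_le hnv (m := S v) fun i h1 h2 => heq ▸ hlo i (by omega) h2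
  have hR_le := hR.le_max hΓ.le hnv (M := S v + Γ) fun i h1 h2 => heq ▸ hhi i (by omega) h2
  rw [hL.eq_neg_of_isGammaMin hΓ.le hu] at hL_ge hL_le
  rw [hR.eq_of_isGammaMin hΓ.le hv] at hR_ge hR_le
  rw [max_self] at hL_le
  unfold chainSum
  rcases min_le_iff.1 hL_ge with h1 | h1 <;> rcases le_max_iff.1 hR_le with h2 | h2 <;>
  rcases min_le_iff.1 hR_ge with h3 | h3 <;> linarith

end ChainSum

section Fisher

variable {Γ : ℝ} {S L R : ℤ → ℝ} {u v n : ℤ}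

theorem fisherPlus_iff_of_adjacent (hu : IsGammaExtremum S Γ u) (hv : IsGammaExtremum S Γ v)
    (hun : u < n) (hnv : n ≤ v) (hadj : ∀ w, u < w → w < v → ¬ IsGammaExtremum S Γ w) :
    FisherPlus S Γ n ↔ IsGammaMin S Γ u ∧ IsGammaMax S Γ v ∧ Γ < S v - S u := by
  constructor
  · rintro ⟨u', v', hu', hv', hu'n, hnv', hgap, hadj'⟩
    have hadj'' w (h1 : u' < w) (h2 : w < v') : ¬ IsGammaExtremum S Γ w :=
      not_or.2 (hadj' w h1 h2)
    obtain rfl : u' = u := by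
      rcases lt_trichotomy u' u with h | h | h
      · exact (hadj'' u h (by omega) hu).elim
      · exact h
      · exact (hadj u' h (by omega) (Or.inl hu')).elim
    obtain rfl : v' = v := by
      rcases lt_trichotomy v' v with h | h | h
      · exact (hadj v' (by omega) h (Or.inr hv')).elim
      · exact h
      · exact (hadj'' v (by omega) h hv).elim
    exact ⟨hu', hv', hgap⟩
  · rintro ⟨hu', hv', hgap⟩
    exact ⟨u, v, hu', hv', hun, hnv, hgap, fun w h1 h2 => not_or.1 (hadj w h1 h2)⟩

theorem fisherMinus_iff_of_adjacent (hu : IsGammaExtremum S Γ u) (hv : IsGammaExtremum S Γ v)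
    (hun : u < n) (hnv : n ≤ v) (hadj : ∀ w, u < w → w < v → ¬ IsGammaExtremum S Γ w) :
    FisherMinus S Γ n ↔ IsGammaMax S Γ u ∧ IsGammaMin S Γ v ∧ Γ < S u - S v := by
  change FisherPlus (-S) Γ n ↔ _
  rw [fisherPlus_iff_of_adjacent (isGammaExtremum_neg.2 hu)
    (isGammaExtremum_neg.2 hv) hun hnv fun w h1 h2 h => hadj w h1 h2 (isGammaExtremum_neg.1 h)]
  simp only [isGammaMin_neg, isGammaMax_neg, Pi.neg_apply, neg_sub_neg]

theorem fisherConfig_neg (hΓ : 0 < Γ) (hu : IsGammaExtremum S Γ u) (hv : IsGammaExtremum S Γ v)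
    (hun : u < n) (hnv : n ≤ v) (hadj : ∀ w, u < w → w < v → ¬ IsGammaExtremum S Γ w) :
    fisherConfig (-S) Γ n = -fisherConfig S Γ n := by
  have hneg : FisherMinus (-S) Γ n ↔ FisherPlus S Γ n := by
    simp only [FisherMinus, Pi.neg_apply, neg_neg]
  have hexcl : ¬ (IsGammaMin S Γ u ∧ IsGammaMax S Γ u) := fun h => h.1.not_isGammaMax hΓ h.2
  unfold fisherConfig
  rw [hneg, show FisherPlus (-S) Γ n ↔ FisherMinus S Γ n from Iff.rfl,
    fisherPlus_iff_of_adjacent hu hv hun hnv hadj, fisherMinus_iff_of_adjacent hu hv hun hnv hadj]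
  split_ifs <;> norm_num
  tauto

theorem sign_chainSum_eq_fisherConfig (hΓ : 0 < Γ) (hL : IsForwardChain Γ S L)
    (hR : IsBackwardChain Γ S R) (hu : IsGammaMin S Γ u) (hv : IsGammaExtremum S Γ v)
    (hun : u < n) (hnv : n ≤ v) (hadj : ∀ w, u < w → w < v → ¬ IsGammaExtremum S Γ w) :
    Real.sign (chainSum S L R n) = fisherConfig S Γ n := by
  have hplus := fisherPlus_iff_of_adjacent (Or.inl hu) hv hun hnv hadj
  have hminus : ¬ FisherMinus S Γ n := fun h =>
    hu.not_isGammaMax hΓ ((fisherMinus_iff_of_adjacent (Or.inl hu) hv hun hnv hadj).1 h).1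
  rw [fisherConfig, if_neg hminus]
  rcases hv with hv | hv
  · rw [chainSum_eq_zero_of_isGammaMin hΓ hL hR hu hv hun hnv hadj, Real.sign_zero,
      if_neg fun h => hv.not_isGammaMax hΓ (hplus.1 h).2.1]
  · rw [sign_chainSum_of_ascending hΓ hL hR hu hv hun hnv hadj]
    simp only [hplus, hu, hv, true_and]

end Fisher

theorem exists_lt_of_unbounded_left {f : ℤ → ℝ} (hf : ∀ M, ∃ n : ℤ, n < 0 ∧ M < f n)
    (b : ℤ) (M : ℝ) : ∃ p < b, M < f p := by
  obtain ⟨p, hp0, hp⟩ := hf (max M (∑ i ∈ Finset.Icc b 0, |f i|))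
  refine ⟨p, ?_, (le_max_left _ _).trans_lt hp⟩
  by_contra! hbp
  have := Finset.single_le_sum (fun i _ => abs_nonneg (f i)) (Finset.mem_Icc.2 ⟨hbp, hp0.le⟩)
  linarith [le_abs_self (f p), le_max_right M (∑ i ∈ Finset.Icc b 0, |f i|)]

theorem exists_gt_of_unbounded_right {f : ℤ → ℝ} (hf : ∀ M, ∃ n : ℤ, 0 < n ∧ M < f n)
    (b : ℤ) (M : ℝ) : ∃ p > b, M < f p := by
  obtain ⟨p, hpb, hp⟩ := exists_lt_of_unbounded_left (f := fun k => f (-k))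
    (fun M => (hf M).elim fun n hn => ⟨-n, by omega, by simpa using hn.2⟩) (-b) M
  exact ⟨-p, by omega, hp⟩

section Existence

variable {Γ : ℝ} {S : ℤ → ℝ}

theorem exists_isGammaMin_lt (hΓ : 0 < Γ) (hhigh : ∀ M, ∃ n : ℤ, n < 0 ∧ M < S n)
    (hlow : ∀ M, ∃ n : ℤ, n < 0 ∧ S n < -M) (a : ℤ) : ∃ w < a, IsGammaMin S Γ w := by
  obtain ⟨q, hqa, hq⟩ := exists_lt_of_unbounded_left (f := -S)
    (fun M => (hlow M).imp fun n hn => ⟨hn.1, by simp only [Pi.neg_apply]; linarith [hn.2]⟩)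
    a (Γ - S a)
  obtain ⟨p, hpq, hp⟩ := exists_lt_of_unbounded_left hhigh q (S a)
  simp only [Pi.neg_apply] at hq
  obtain ⟨w, -, hwa, hw⟩ :=
    exists_isGammaMin_mem_Ioo hΓ hpq.le hqa.le (by linarith) (by linarith)
  exact ⟨w, hwa, hw⟩

theorem exists_isGammaMin_gt (hΓ : 0 < Γ) (hhigh : ∀ M, ∃ n : ℤ, 0 < n ∧ M < S n)
    (hlow : ∀ M, ∃ n : ℤ, 0 < n ∧ S n < -M) (a : ℤ) : ∃ w > a, IsGammaMin S Γ w := by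
  obtain ⟨q, hqa, hq⟩ := exists_gt_of_unbounded_right (f := -S)
    (fun M => (hlow M).imp fun n hn => ⟨hn.1, by simp only [Pi.neg_apply]; linarith [hn.2]⟩)
    a (Γ - S a)
  obtain ⟨p, hpq, hp⟩ := exists_gt_of_unbounded_right hhigh q (S a)
  simp only [Pi.neg_apply] at hq
  obtain ⟨w, haw, -, hw⟩ :=
    exists_isGammaMin_mem_Ioo hΓ hqa.le hpq.le (by linarith) (by linarith)
  exact ⟨w, haw, hw⟩

end Existence

theorem exists_adjacent_of_exists_lt_of_exists_ge {P : ℤ → Prop} {n : ℤ} (hlt : ∃ w < n, P w)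
    (hge : ∃ w ≥ n, P w) : ∃ u v, u < n ∧ n ≤ v ∧ P u ∧ P v ∧ ∀ w, u < w → w < v → ¬ P w := by
  obtain ⟨u, ⟨hun, hu⟩, hmax⟩ :=
    Int.exists_greatest_of_bdd (P := fun w => w < n ∧ P w) ⟨n, fun z hz => hz.1.le⟩ hlt
  obtain ⟨v, ⟨hnv, hv⟩, hmin⟩ :=
    Int.exists_least_of_bdd (P := fun w => n ≤ w ∧ P w) ⟨n, fun z hz => hz.1⟩ hge
  refine ⟨u, v, hun, hnv, hu, hv, fun w h1 h2 hw => ?_⟩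
  rcases lt_or_ge w n with h | h
  · exact absurd (hmax w ⟨h, hw⟩) (by omega)
  · exact absurd (hmin w ⟨h, hw⟩) (by omega)

theorem stmt_16_general (Γ : ℝ) (hΓ : 0 < Γ) (h S : ℤ → ℝ)
    (hSrec : ∀ n : ℤ, S n - S (n - 1) = h n)
    (hosc1 : ∀ M : ℝ, ∃ n : ℤ, 0 < n ∧ M < S n)
    (hosc2 : ∀ M : ℝ, ∃ n : ℤ, 0 < n ∧ S n < -M)
    (hosc3 : ∀ M : ℝ, ∃ n : ℤ, n < 0 ∧ M < S n)
    (hosc4 : ∀ M : ℝ, ∃ n : ℤ, n < 0 ∧ S n < -M)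
    (L R : ℤ → ℝ)
    (hL : ∀ n : ℤ, L n = hatb Γ (L (n - 1) + 2 * h n))
    (hR : ∀ n : ℤ, R n = hatb Γ (R (n + 1) + 2 * h n))
    (n : ℤ) :
    Real.sign (L (n - 1) + 2 * h n + R (n + 1)) = fisherConfig S Γ n := by
  have hL' : IsForwardChain Γ S L := fun k => by rw [hSrec k]; exact hL k
  have hR' : IsBackwardChain Γ S R := fun k => by rw [hSrec k]; exact hR k
  obtain ⟨u, v, hun, hnv, hu, hv, hadj⟩ :=
    exists_adjacent_of_exists_lt_of_exists_ge (P := IsGammaExtremum S Γ)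
      ((exists_isGammaMin_lt hΓ hosc3 hosc4 n).imp fun w hw => ⟨hw.1, Or.inl hw.2⟩)
      ((exists_isGammaMin_gt hΓ hosc1 hosc2 (n - 1)).imp fun w hw => ⟨by omega, Or.inl hw.2⟩)
  rw [← hSrec n]
  change Real.sign (chainSum S L R n) = _
  rcases hu with hu | hu
  · exact sign_chainSum_eq_fisherConfig hΓ hL' hR' hu hv hun hnv hadj
  · have hneg := sign_chainSum_eq_fisherConfig hΓ (hL'.neg hΓ.le) (hR'.neg hΓ.le)
      (isGammaMin_neg.2 hu) (isGammaExtremum_neg.2 hv) hun hnv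
      fun w h1 h2 h => hadj w h1 h2 (isGammaExtremum_neg.1 h)
    rwa [chainSum_neg, Real.sign_neg, fisherConfig_neg hΓ (Or.inr hu) hv hun hnv hadj,
      neg_inj] at hneg

/-- For the hard-wall reflected chains `\widehat{l}` (forward) and `\widehat{r}`
(backward) driven by a field whose walk `S` oscillates unboundedly in both
directions, at every site `n` one has
`sign(\widehat{l}_{n-1} + 2h_n + \widehat{r}_{n+1}) = s^{(F)}_n`
(with the convention `sign 0 = 0`). -/
theorem stmt_16 (Γ : ℝ) (hΓ : 0 < Γ) (h S : ℤ → ℝ)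
    (hS0 : S 0 = 0) (hSrec : ∀ n : ℤ, S n - S (n - 1) = h n)
    (hosc1 : ∀ M : ℝ, ∃ n : ℤ, 0 < n ∧ M < S n)
    (hosc2 : ∀ M : ℝ, ∃ n : ℤ, 0 < n ∧ S n < -M)
    (hosc3 : ∀ M : ℝ, ∃ n : ℤ, n < 0 ∧ M < S n)
    (hosc4 : ∀ M : ℝ, ∃ n : ℤ, n < 0 ∧ S n < -M)
    (L R : ℤ → ℝ)
    (hL : ∀ n : ℤ, L n = hatb Γ (L (n - 1) + 2 * h n))
    (hR : ∀ n : ℤ, R n = hatb Γ (R (n + 1) + 2 * h n))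
    (n : ℤ) :
    Real.sign (L (n - 1) + 2 * h n + R (n + 1)) = fisherConfig S Γ n :=
  stmt_16_general Γ hΓ h S hSrec hosc1 hosc2 hosc3 hosc4 L R hL hR n
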